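/- (Explicit optimal purifying Hamiltonian; computation in the first proof of Theorem 3.) Let ρ be a full-rank d×d density matrix with spectral decomposition ρ = Σ_j p_j |φ_j⟩⟨φ_j|, where p_j > 0 and {φ_j} is an orthonormal basis of ℂ^d, and let H_S be an Hermitian d×d matrix. Define the Hermitian matrix H_A by its matrix elements ⟨φ_a|H_A|φ_b⟩ = −2·(√(p_a p_b)/(p_a + p_b))·⟨φ_b|H_S|φ_a⟩, the unit vector Φ = Σ_j √p_j φ_j ⊗ φ_j ∈ ℂ^d ⊗ ℂ^d, and H_tot = H_S ⊗ I + I ⊗ H_A. Then: (i) Tr(ρ H_A) = −Tr(ρ H_S), and consequently ⟨Φ|H_tot|Φ⟩ = 0; (ii) ⟨Φ|H_tot²|Φ⟩ − ⟨Φ|H_tot|Φ⟩² = F_{H_S}(ρ)/4; (iii) F_{H_S}(ρ)/4 = V_{H_S}(ρ) − V_{H_A}(ρ), where V_X(ρ) = Tr(ρ X²) − (Tr(ρ X))². -/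

import Mathlib

/-!
Everything is unitarily invariant, so we work in the eigenbasis of `ρ`: with `U` the unitary whose
columns are the `φ j`, `ρ = U D Uᴴ` for `D = diag p`, and `Φ = (U ⊗ U) vec √D`. Let `S` and `A`
be the matrices of `H_S` and `H_A` in this basis, so that `A a b = r_ab S b a` with
`r_ab = -2√(p_a p_b)/(p_a + p_b)`. By `(X ⊗ Y) vec M = vec (Y M Xᵀ)`, the conjugated total
Hamiltonian maps `vec √D` to `vec M` with `M a b = √p_a (p_a - p_b)/(p_a + p_b) S b a`. Since `M`
has zero diagonal, `⟨Φ|H_tot|Φ⟩ = Tr(√D M) = 0`, and `⟨Φ|H_tot²|Φ⟩ = ‖M‖² = Σ p_a w_ab² |S_ab|²`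
with `w_ab = (p_a - p_b)/(p_a + p_b)`. As `1 - r_ab² = w_ab²`, the same sum is
`V_{H_S}(ρ) - V_{H_A}(ρ)`, and symmetrising it in `a ↔ b` gives `F_{H_S}(ρ)/4`.
-/

open Matrix Complex Filter Kronecker
open scoped ComplexOrder

noncomputable section

/-- n-fold Kronecker power of a matrix, indexed by functions `Fin n → Fin d`. -/
def kronPow {d : ℕ} (X : Matrix (Fin d) (Fin d) ℂ) (n : ℕ) :
    Matrix (Fin n → Fin d) (Fin n → Fin d) ℂ :=
  Matrix.of fun i j => ∏ k, X (i k) (j k)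

/-- The `n`-copy (non-interacting) Hamiltonian `Σᵢ I^{⊗(i-1)} ⊗ H ⊗ I^{⊗(n-i)}`. -/
def nCopyHam {d : ℕ} (H : Matrix (Fin d) (Fin d) ℂ) (n : ℕ) :
    Matrix (Fin n → Fin d) (Fin n → Fin d) ℂ :=
  ∑ k : Fin n, Matrix.of fun i j =>
    H (i k) (j k) * ∏ l ∈ Finset.univ.erase k, (if i l = j l then (1 : ℂ) else 0)

/-- Time evolution unitary `e^{-iHt}`. -/
def timeEvol {m : Type*} [Fintype m] [DecidableEq m] (H : Matrix m m ℂ) (t : ℝ) :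
    Matrix m m ℂ :=
  NormedSpace.exp ((-(Complex.I * (t : ℂ))) • H)

/-- The positive-semidefinite square root `U √D Uᴴ` (the older Mathlib's `PosSemidef.sqrt`). -/
def posSemidefSqrt {m : Type*} [Fintype m] [DecidableEq m] {A : Matrix m m ℂ}
    (hA : A.PosSemidef) : Matrix m m ℂ :=
  hA.1.eigenvectorUnitary.1 * diagonal ((↑) ∘ (hA.1.eigenvalues · |>.sqrt)) *
  (star hA.1.eigenvectorUnitary : Matrix m m ℂ)

/-- Trace norm `‖A‖₁ = Tr √(AᴴA)`. -/
def traceNorm {m : Type*} [Fintype m] [DecidableEq m] (A : Matrix m m ℂ) : ℝ :=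
  ((posSemidefSqrt (Matrix.posSemidef_conjTranspose_mul_self A)).trace).re

/-- A quantum channel: a map admitting a Kraus representation. -/
def IsQuantumChannel {m n : Type*} [Fintype m] [DecidableEq m] [Fintype n] [DecidableEq n]
    (E : Matrix m m ℂ → Matrix n n ℂ) : Prop :=
  ∃ (K : ℕ) (A : Fin K → Matrix n m ℂ),
    (∀ X, E X = ∑ k, A k * X * (A k)ᴴ) ∧ (∑ k, (A k)ᴴ * A k = 1)

/-- Time-translation invariance of a map w.r.t. input/output Hamiltonians. -/
def IsTI {m n : Type*} [Fintype m] [DecidableEq m] [Fintype n] [DecidableEq n]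
    (Hin : Matrix m m ℂ) (Hout : Matrix n n ℂ)
    (E : Matrix m m ℂ → Matrix n n ℂ) : Prop :=
  ∀ (t : ℝ) (X : Matrix m m ℂ),
    timeEvol Hout t * E X * timeEvol Hout (-t) =
      E (timeEvol Hin t * X * timeEvol Hin (-t))

/-- Energy variance of a (unit) vector. -/
def varVec {m : Type*} [Fintype m] (H : Matrix m m ℂ) (ψ : m → ℂ) : ℝ :=
  (star ψ ⬝ᵥ ((H * H) *ᵥ ψ)).re - ((star ψ ⬝ᵥ (H *ᵥ ψ)).re) ^ 2

/-- The quantum Fisher information formula for a given spectral decomposition data. -/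
def qfiOf {m : Type*} [Fintype m] (H : Matrix m m ℂ) (p : m → ℝ) (φ : m → m → ℂ) : ℝ :=
  2 * ∑ j, ∑ k,
    if 0 < p j + p k then
      (p j - p k) ^ 2 / (p j + p k) * Complex.normSq (star (φ j) ⬝ᵥ (H *ᵥ φ k))
    else 0

/-- Quantum Fisher information of a Hermitian (e.g. density) matrix `ρ` w.r.t. `H`. -/
def QFI {m : Type*} [Fintype m] [DecidableEq m] {ρ : Matrix m m ℂ}
    (hρ : ρ.IsHermitian) (H : Matrix m m ℂ) : ℝ :=
  qfiOf H hρ.eigenvalues (fun j i => hρ.eigenvectorBasis j i)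

open scoped Classical in
/-- Total positive-semidefinite square root (zero on non-PSD inputs). -/
def msqrt {m : Type*} [Fintype m] [DecidableEq m] (A : Matrix m m ℂ) : Matrix m m ℂ :=
  if h : A.PosSemidef then posSemidefSqrt h else 0

/-- Fidelity `Fid(ρ,σ) = (Tr √(√ρ σ √ρ))² = ‖√σ √ρ‖₁²`. -/
def fid {m : Type*} [Fintype m] [DecidableEq m] (ρ σ : Matrix m m ℂ) : ℝ :=
  (traceNorm (msqrt σ * msqrt ρ)) ^ 2

/-- Density matrix. -/
def IsDensityMatrix {m : Type*} [Fintype m] (ρ : Matrix m m ℂ) : Prop :=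
  ρ.PosSemidef ∧ ρ.trace = 1


/-- Variance of an observable `X` in the state `ρ`: `Tr(ρX²) − (Tr(ρX))²`. -/
def varMat {m : Type*} [Fintype m] (X ρ : Matrix m m ℂ) : ℝ :=
  ((ρ * (X * X)).trace).re - (((ρ * X).trace).re) ^ 2

/-- The coefficient `r_ab = purifCoeff p_a p_b` in the definition of `H_A`. -/
def purifCoeff (x y : ℝ) : ℝ := -2 * (Real.sqrt (x * y) / (x + y))

lemma purifCoeff_comm (x y : ℝ) : purifCoeff x y = purifCoeff y x := by
  rw [purifCoeff, purifCoeff, mul_comm x, add_comm x]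

lemma purifCoeff_self {x : ℝ} (hx : 0 < x) : purifCoeff x x = -1 := by
  rw [purifCoeff, Real.sqrt_mul_self hx.le]
  field_simp
  ring

lemma sqrt_add_purifCoeff_mul_sqrt {x y : ℝ} (hx : 0 < x) (hy : 0 < y) :
    Real.sqrt x + purifCoeff x y * Real.sqrt y = Real.sqrt x * ((x - y) / (x + y)) := by
  have hxy : x + y ≠ 0 := by positivity
  rw [purifCoeff, Real.sqrt_mul hx.le]
  field_simp
  linear_combination (-2) * Real.mul_self_sqrt hy.le

lemma one_sub_purifCoeff_sq {x y : ℝ} (hx : 0 < x) (hy : 0 < y) :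
    1 - purifCoeff x y ^ 2 = ((x - y) / (x + y)) ^ 2 := by
  have hxy : x + y ≠ 0 := by positivity
  rw [purifCoeff, mul_pow, div_pow, Real.sq_sqrt (mul_pos hx hy).le]
  field_simp
  ring

lemma mul_div_sq_add_mul_div_sq {x y : ℝ} (hxy : x + y ≠ 0) :
    x * ((x - y) / (x + y)) ^ 2 + y * ((y - x) / (y + x)) ^ 2 = (x - y) ^ 2 / (x + y) := by
  rw [add_comm y x]
  field_simp
  ring

lemma sum_sum_mul_eq_of_symm {n : Type*} [Fintype n] {N : n → n → ℝ}
    (hN : ∀ a b, N a b = N b a) (f : n → n → ℝ) :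
    ∑ a, ∑ b, f a b * N a b = ∑ a, ∑ b, (f a b + f b a) / 2 * N a b := by
  have hswap : ∑ a, ∑ b, f b a * N a b = ∑ a, ∑ b, f a b * N a b := by
    rw [Finset.sum_comm]
    simp_rw [hN]
  simp_rw [add_div, add_mul, Finset.sum_add_distrib, div_mul_eq_mul_div, ← Finset.sum_div, hswap]
  ring

section HermitianMatrix

variable {m k : Type*}

lemma Matrix.IsHermitian.normSq_apply_comm {M : Matrix m m ℂ} (hM : M.IsHermitian) (a b : m) :
    normSq (M a b) = normSq (M b a) := by
  rw [← hM.apply a b, Complex.star_def, Complex.normSq_conj]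

lemma Matrix.IsHermitian.kronecker {R : Type*} [CommSemiring R] [StarRing R]
    {X : Matrix m m R} {Y : Matrix k k R}
    (hX : X.IsHermitian) (hY : Y.IsHermitian) : (X ⊗ₖ Y).IsHermitian := by
  rw [IsHermitian, conjTranspose_kronecker, hX.eq, hY.eq]

variable [Fintype m] [Fintype k]

lemma Matrix.IsHermitian.star_dotProduct_mul_self_mulVec {R : Type*} [Semiring R] [StarRing R]
    {K : Matrix m m R} (hK : K.IsHermitian) (ψ : m → R) :
    star ψ ⬝ᵥ ((K * K) *ᵥ ψ) = star (K *ᵥ ψ) ⬝ᵥ (K *ᵥ ψ) := by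
  rw [← mulVec_mulVec, dotProduct_mulVec, star_mulVec, hK.eq]

lemma trace_conjTranspose_mul_self_eq_sum (M : Matrix m k ℂ) :
    (Mᴴ * M).trace = ∑ j, ∑ i, (normSq (M i j) : ℂ) := by
  simp only [trace, diag_apply, mul_apply, conjTranspose_apply, Complex.star_def,
    Complex.normSq_eq_conj_mul_self]

lemma Matrix.IsHermitian.re_trace_diagonal_mul_mul_self [DecidableEq m] {M : Matrix m m ℂ}
    (hM : M.IsHermitian) (c : m → ℝ) :
    ((diagonal (fun j => (c j : ℂ)) * (M * M)).trace).re = ∑ a, ∑ b, c a * normSq (M a b) := by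
  have hsq : ∀ a b, M a b * M b a = normSq (M a b) := fun a b => by
    rw [← hM.apply b a, Complex.star_def, Complex.mul_conj]
  simp only [trace, diag_apply, diagonal_mul]
  simp only [mul_apply, Finset.mul_sum, hsq, ← ofReal_mul, ← ofReal_sum, ofReal_re]

end HermitianMatrix

section UnitaryInvariance

variable {m : Type*} [Fintype m]

lemma star_mulVec_dotProduct_mulVec_mulVec {R : Type*} [Semiring R] [StarRing R]
    (V H : Matrix m m R) (ψ : m → R) :
    star (V *ᵥ ψ) ⬝ᵥ (H *ᵥ (V *ᵥ ψ)) = star ψ ⬝ᵥ ((Vᴴ * H * V) *ᵥ ψ) := by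
  rw [star_mulVec, ← dotProduct_mulVec, mulVec_mulVec, mulVec_mulVec, Matrix.mul_assoc]

lemma trace_mul_mul_conjTranspose_mul {R : Type*} [CommSemiring R] [StarRing R]
    (U ρ X : Matrix m m R) :
    (U * ρ * Uᴴ * X).trace = (ρ * (Uᴴ * X * U)).trace := by
  rw [Matrix.mul_assoc, trace_mul_comm, ← Matrix.mul_assoc, trace_mul_comm]

variable [DecidableEq m]

lemma conjTranspose_mul_mul_self_of_mem_unitaryGroup {R : Type*} [CommRing R] [StarRing R]
    {V : Matrix m m R} (hV : V ∈ unitaryGroup m R) (H : Matrix m m R) :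
    Vᴴ * (H * H) * V = (Vᴴ * H * V) * (Vᴴ * H * V) := by
  have hVV : V * Vᴴ = 1 := mem_unitaryGroup_iff.mp hV
  simp only [Matrix.mul_assoc]
  rw [← Matrix.mul_assoc V, hVV, Matrix.one_mul]

lemma varVec_mulVec {V : Matrix m m ℂ} (hV : V ∈ unitaryGroup m ℂ) (H : Matrix m m ℂ)
    (ψ : m → ℂ) : varVec H (V *ᵥ ψ) = varVec (Vᴴ * H * V) ψ := by
  simp only [varVec, star_mulVec_dotProduct_mulVec_mulVec,
    conjTranspose_mul_mul_self_of_mem_unitaryGroup hV]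

lemma varMat_mul_mul_conjTranspose {U : Matrix m m ℂ} (hU : U ∈ unitaryGroup m ℂ)
    (X ρ : Matrix m m ℂ) : varMat X (U * ρ * Uᴴ) = varMat (Uᴴ * X * U) ρ := by
  simp only [varMat, trace_mul_mul_conjTranspose_mul,
    conjTranspose_mul_mul_self_of_mem_unitaryGroup hU]

lemma conjTranspose_kronecker_mul_kronecker_one_add_one_kronecker_mul {k R : Type*} [Fintype k]
    [DecidableEq k] [CommRing R] [StarRing R] {U : Matrix m m R} {V : Matrix k k R}
    (hU : U ∈ unitaryGroup m R) (hV : V ∈ unitaryGroup k R) (X : Matrix m m R)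
    (Y : Matrix k k R) :
    (U ⊗ₖ V)ᴴ * (X ⊗ₖ 1 + 1 ⊗ₖ Y) * (U ⊗ₖ V) = (Uᴴ * X * U) ⊗ₖ 1 + 1 ⊗ₖ (Vᴴ * Y * V) := by
  rw [conjTranspose_kronecker, Matrix.mul_add, Matrix.add_mul, ← mul_kronecker_mul,
    ← mul_kronecker_mul, ← mul_kronecker_mul, ← mul_kronecker_mul, Matrix.mul_one,
    Matrix.mul_one, show Uᴴ * U = 1 from mem_unitaryGroup_iff'.mp hU,
    show Vᴴ * V = 1 from mem_unitaryGroup_iff'.mp hV]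

end UnitaryInvariance

section Eigenbasis

variable {n : Type*} [Fintype n]

lemma star_dotProduct_mulVec_eq_apply (φ : n → n → ℂ) (M : Matrix n n ℂ) (a b : n) :
    star (φ a) ⬝ᵥ (M *ᵥ φ b) = ((of φ)ᵀᴴ * M * (of φ)ᵀ) a b := by
  simp only [dotProduct, Pi.star_apply, RCLike.star_def, mulVec, Finset.mul_sum, mul_apply,
    conjTranspose_apply, transpose_apply, of_apply, Finset.sum_mul, mul_assoc]
  exact Finset.sum_comm

variable [DecidableEq n]

lemma transpose_of_mem_unitaryGroup {φ : n → n → ℂ}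
    (horth : ∀ a b, star (φ a) ⬝ᵥ φ b = if a = b then (1 : ℂ) else 0) :
    (of φ)ᵀ ∈ unitaryGroup n ℂ := by
  rw [mem_unitaryGroup_iff']
  ext a b
  simpa [mul_apply, dotProduct, one_apply] using horth a b

lemma sum_smul_vecMulVec_eq_mul_diagonal_mul (φ : n → n → ℂ) (c : n → ℂ) :
    ∑ j, c j • vecMulVec (φ j) (star (φ j)) = (of φ)ᵀ * diagonal c * (of φ)ᵀᴴ := by
  ext a b
  simp only [Matrix.sum_apply, Matrix.smul_apply, vecMulVec_apply, mul_apply, diagonal_apply,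
    mul_ite, mul_zero, Finset.sum_ite_eq', Finset.mem_univ, if_true, smul_eq_mul,
    conjTranspose_apply, transpose_apply, of_apply, Pi.star_apply]
  exact Finset.sum_congr rfl fun j _ => by ring

lemma kronecker_mulVec_vec_diagonal (φ : n → n → ℂ) (s : n → ℂ) :
    ((of φ)ᵀ ⊗ₖ (of φ)ᵀ) *ᵥ vec (diagonal s) =
      fun q : n × n => ∑ j, s j * φ j q.1 * φ j q.2 := by
  rw [kronecker_mulVec_vec]
  ext q
  simp [mul_apply, diagonal_apply, mul_comm, mul_left_comm]

end Eigenbasis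

section Purification

variable {n : Type*} {p : n → ℝ} {S A : Matrix n n ℂ}

lemma isHermitian_of_apply_eq_purifCoeff_mul (hS : S.IsHermitian)
    (hA : ∀ a b, A a b = (purifCoeff (p a) (p b) : ℂ) * S b a) : A.IsHermitian := by
  ext a b
  rw [conjTranspose_apply, hA, hA, ← hS.apply b a, star_mul', Complex.star_def,
    Complex.conj_ofReal, purifCoeff_comm]

variable [Fintype n]

/-- `F_H(ρ)/4`, written in the eigenbasis of `ρ` (where `H` has matrix `S`) with its summand
symmetrised in `a ↔ b`. -/
def qfiQuarter (p : n → ℝ) (S : Matrix n n ℂ) : ℝ :=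
  ∑ a, ∑ b, p a * ((p a - p b) / (p a + p b)) ^ 2 * normSq (S a b)

lemma qfiOf_div_four_eq_qfiQuarter (hp : ∀ j, 0 < p j) {H : Matrix n n ℂ} (hH : H.IsHermitian)
    (φ : n → n → ℂ) : qfiOf H p φ / 4 = qfiQuarter p ((of φ)ᵀᴴ * H * (of φ)ᵀ) := by
  have hS := isHermitian_conjTranspose_mul_mul (of φ)ᵀ hH
  rw [qfiQuarter, sum_sum_mul_eq_of_symm hS.normSq_apply_comm]
  simp only [qfiOf, if_pos (add_pos (hp _) (hp _)), star_dotProduct_mulVec_eq_apply,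
    mul_div_sq_add_mul_div_sq (add_pos (hp _) (hp _)).ne', Finset.mul_sum, Finset.sum_div]
  exact Finset.sum_congr rfl fun a _ => Finset.sum_congr rfl fun b _ => by ring

variable [DecidableEq n]

lemma trace_diagonal_mul_eq_neg (hp : ∀ j, 0 < p j)
    (hA : ∀ a b, A a b = (purifCoeff (p a) (p b) : ℂ) * S b a) :
    (diagonal (fun j => (p j : ℂ)) * A).trace = -(diagonal (fun j => (p j : ℂ)) * S).trace := by
  simp [trace, diagonal_mul, hA, purifCoeff_self (hp _)]

lemma kronecker_one_add_one_kronecker_mulVec_vec_diagonal (hp : ∀ j, 0 < p j)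
    (hA : ∀ a b, A a b = (purifCoeff (p a) (p b) : ℂ) * S b a) :
    (S ⊗ₖ 1 + 1 ⊗ₖ A) *ᵥ vec (diagonal fun j => (Real.sqrt (p j) : ℂ)) =
      vec (of fun a b => ((Real.sqrt (p a) * ((p a - p b) / (p a + p b)) : ℝ) : ℂ) * S b a) := by
  rw [add_mulVec, kronecker_mulVec_vec, kronecker_mulVec_vec]
  ext ⟨b, a⟩
  have key := congrArg (fun x : ℝ => (x : ℂ)) (sqrt_add_purifCoeff_mul_sqrt (hp a) (hp b))
  simp only [vec, Pi.add_apply, Matrix.mul_one, Matrix.one_mul, transpose_one,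
    diagonal_mul, mul_diagonal, transpose_apply, hA, of_apply]
  push_cast at key ⊢
  linear_combination S b a * key

lemma star_vec_dotProduct_kronecker_one_add_one_kronecker_mulVec_eq_zero (hp : ∀ j, 0 < p j)
    (hA : ∀ a b, A a b = (purifCoeff (p a) (p b) : ℂ) * S b a) :
    star (vec (diagonal fun j => (Real.sqrt (p j) : ℂ))) ⬝ᵥ
      ((S ⊗ₖ 1 + 1 ⊗ₖ A) *ᵥ vec (diagonal fun j => (Real.sqrt (p j) : ℂ))) = 0 := by
  rw [kronecker_one_add_one_kronecker_mulVec_vec_diagonal hp hA, star_vec_dotProduct_vec]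
  simp [trace, diagonal_conjTranspose]

lemma star_vec_dotProduct_kronecker_one_add_one_kronecker_sq_mulVec (hp : ∀ j, 0 < p j)
    (hS : S.IsHermitian) (hA : ∀ a b, A a b = (purifCoeff (p a) (p b) : ℂ) * S b a) :
    star (vec (diagonal fun j => (Real.sqrt (p j) : ℂ))) ⬝ᵥ
      (((S ⊗ₖ 1 + 1 ⊗ₖ A) * (S ⊗ₖ 1 + 1 ⊗ₖ A)) *ᵥ
        vec (diagonal fun j => (Real.sqrt (p j) : ℂ))) = qfiQuarter p S := by
  have hK : (S ⊗ₖ 1 + 1 ⊗ₖ A).IsHermitian :=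
    (hS.kronecker isHermitian_one).add
      (isHermitian_one.kronecker (isHermitian_of_apply_eq_purifCoeff_mul hS hA))
  rw [hK.star_dotProduct_mul_self_mulVec,
    kronecker_one_add_one_kronecker_mulVec_vec_diagonal hp hA, star_vec_dotProduct_vec,
    trace_conjTranspose_mul_self_eq_sum, Finset.sum_comm, qfiQuarter, ofReal_sum]
  refine Finset.sum_congr rfl fun a _ => ?_
  rw [ofReal_sum]
  refine Finset.sum_congr rfl fun b _ => ?_
  rw [of_apply, normSq_mul, normSq_ofReal, hS.normSq_apply_comm b a]
  congr 1
  linear_combination ((p a - p b) / (p a + p b)) ^ 2 * normSq (S a b) * Real.mul_self_sqrt (hp a).le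

lemma varVec_kronecker_one_add_one_kronecker_eq_qfiQuarter (hp : ∀ j, 0 < p j)
    (hS : S.IsHermitian) (hA : ∀ a b, A a b = (purifCoeff (p a) (p b) : ℂ) * S b a) :
    varVec (S ⊗ₖ 1 + 1 ⊗ₖ A) (vec (diagonal fun j => (Real.sqrt (p j) : ℂ))) =
      qfiQuarter p S := by
  rw [varVec, star_vec_dotProduct_kronecker_one_add_one_kronecker_mulVec_eq_zero hp hA,
    star_vec_dotProduct_kronecker_one_add_one_kronecker_sq_mulVec hp hS hA]
  simp

lemma varMat_sub_varMat_eq_qfiQuarter (hp : ∀ j, 0 < p j) (hS : S.IsHermitian)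
    (hA : ∀ a b, A a b = (purifCoeff (p a) (p b) : ℂ) * S b a) :
    varMat S (diagonal fun j => (p j : ℂ)) - varMat A (diagonal fun j => (p j : ℂ)) =
      qfiQuarter p S := by
  rw [varMat, varMat, trace_diagonal_mul_eq_neg hp hA, hS.re_trace_diagonal_mul_mul_self,
    (isHermitian_of_apply_eq_purifCoeff_mul hS hA).re_trace_diagonal_mul_mul_self, qfiQuarter,
    Complex.neg_re, neg_sq, sub_sub_sub_cancel_right, ← Finset.sum_sub_distrib]
  refine Finset.sum_congr rfl fun a _ => ?_
  rw [← Finset.sum_sub_distrib]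
  refine Finset.sum_congr rfl fun b _ => ?_
  rw [hA, normSq_mul, normSq_ofReal, hS.normSq_apply_comm b a,
    ← one_sub_purifCoeff_sq (hp a) (hp b)]
  ring

end Purification

theorem optimal_purifying_hamiltonian_general
    {d : ℕ} (ρ HS HA : Matrix (Fin d) (Fin d) ℂ)
    (p : Fin d → ℝ) (φ : Fin d → Fin d → ℂ)
    (hp : ∀ j, 0 < p j)
    (horth : ∀ a b, star (φ a) ⬝ᵥ φ b = if a = b then (1 : ℂ) else 0)
    (hρdef : ρ = ∑ j, ((p j : ℝ) : ℂ) • Matrix.vecMulVec (φ j) (star (φ j)))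
    (hHS : HS.IsHermitian)
    (hHA : ∀ a b, star (φ a) ⬝ᵥ (HA *ᵥ φ b) =
      ((-2 * (Real.sqrt (p a * p b) / (p a + p b)) : ℝ) : ℂ) *
        (star (φ b) ⬝ᵥ (HS *ᵥ φ a))) :
    ((ρ * HA).trace = -((ρ * HS).trace) ∧
      star (fun q : Fin d × Fin d => ∑ j, ((Real.sqrt (p j) : ℝ) : ℂ) * φ j q.1 * φ j q.2) ⬝ᵥ
        ((HS ⊗ₖ (1 : Matrix (Fin d) (Fin d) ℂ) + (1 : Matrix (Fin d) (Fin d) ℂ) ⊗ₖ HA) *ᵥ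
          fun q : Fin d × Fin d => ∑ j, ((Real.sqrt (p j) : ℝ) : ℂ) * φ j q.1 * φ j q.2) = 0) ∧
    varVec (HS ⊗ₖ (1 : Matrix (Fin d) (Fin d) ℂ) + (1 : Matrix (Fin d) (Fin d) ℂ) ⊗ₖ HA)
        (fun q : Fin d × Fin d => ∑ j, ((Real.sqrt (p j) : ℝ) : ℂ) * φ j q.1 * φ j q.2) =
      qfiOf HS p φ / 4 ∧
    qfiOf HS p φ / 4 = varMat HS ρ - varMat HA ρ := by
  set U : Matrix (Fin d) (Fin d) ℂ := (of φ)ᵀ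
  have hU : U ∈ unitaryGroup (Fin d) ℂ := transpose_of_mem_unitaryGroup horth
  have hS : (Uᴴ * HS * U).IsHermitian := isHermitian_conjTranspose_mul_mul U hHS
  have hA (a b) : (Uᴴ * HA * U) a b = (purifCoeff (p a) (p b) : ℂ) * (Uᴴ * HS * U) b a := by
    rw [← star_dotProduct_mulVec_eq_apply, ← star_dotProduct_mulVec_eq_apply, hHA, purifCoeff]
  have hρ : ρ = U * diagonal (fun j => (p j : ℂ)) * Uᴴ :=
    hρdef.trans (sum_smul_vecMulVec_eq_mul_diagonal_mul φ _)
  have hΦ : (fun q : Fin d × Fin d => ∑ j, ((Real.sqrt (p j) : ℝ) : ℂ) * φ j q.1 * φ j q.2) =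
      (U ⊗ₖ U) *ᵥ vec (diagonal fun j => (Real.sqrt (p j) : ℂ)) :=
    (kronecker_mulVec_vec_diagonal φ _).symm
  rw [hΦ, hρ, star_mulVec_dotProduct_mulVec_mulVec, varVec_mulVec (kronecker_mem_unitary hU hU),
    conjTranspose_kronecker_mul_kronecker_one_add_one_kronecker_mul hU hU,
    trace_mul_mul_conjTranspose_mul, trace_mul_mul_conjTranspose_mul,
    varMat_mul_mul_conjTranspose hU, varMat_mul_mul_conjTranspose hU,
    qfiOf_div_four_eq_qfiQuarter hp hHS]
  exact ⟨⟨trace_diagonal_mul_eq_neg hp hA,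
      star_vec_dotProduct_kronecker_one_add_one_kronecker_mulVec_eq_zero hp hA⟩,
    varVec_kronecker_one_add_one_kronecker_eq_qfiQuarter hp hS hA,
    (varMat_sub_varMat_eq_qfiQuarter hp hS hA).symm⟩

theorem optimal_purifying_hamiltonian
    {d : ℕ} (ρ HS HA : Matrix (Fin d) (Fin d) ℂ)
    (p : Fin d → ℝ) (φ : Fin d → Fin d → ℂ)
    (hp : ∀ j, 0 < p j) (hsum : ∑ j, p j = 1)
    (horth : ∀ a b, star (φ a) ⬝ᵥ φ b = if a = b then (1 : ℂ) else 0)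
    (hρdef : ρ = ∑ j, ((p j : ℝ) : ℂ) • Matrix.vecMulVec (φ j) (star (φ j)))
    (hHS : HS.IsHermitian)
    (hHA : ∀ a b, star (φ a) ⬝ᵥ (HA *ᵥ φ b) =
      ((-2 * (Real.sqrt (p a * p b) / (p a + p b)) : ℝ) : ℂ) *
        (star (φ b) ⬝ᵥ (HS *ᵥ φ a))) :
    ((ρ * HA).trace = -((ρ * HS).trace) ∧
      star (fun q : Fin d × Fin d => ∑ j, ((Real.sqrt (p j) : ℝ) : ℂ) * φ j q.1 * φ j q.2) ⬝ᵥ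
        ((HS ⊗ₖ (1 : Matrix (Fin d) (Fin d) ℂ) + (1 : Matrix (Fin d) (Fin d) ℂ) ⊗ₖ HA) *ᵥ
          fun q : Fin d × Fin d => ∑ j, ((Real.sqrt (p j) : ℝ) : ℂ) * φ j q.1 * φ j q.2) = 0) ∧
    varVec (HS ⊗ₖ (1 : Matrix (Fin d) (Fin d) ℂ) + (1 : Matrix (Fin d) (Fin d) ℂ) ⊗ₖ HA)
        (fun q : Fin d × Fin d => ∑ j, ((Real.sqrt (p j) : ℝ) : ℂ) * φ j q.1 * φ j q.2) =
      qfiOf HS p φ / 4 ∧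
    qfiOf HS p φ / 4 = varMat HS ρ - varMat HA ρ :=
  optimal_purifying_hamiltonian_general ρ HS HA p φ hp horth hρdef hHS hHA
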